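/- arXiv:0809.0746 — 2 statements merged into one kernel-verified Lean document; each statement's English description precedes it below -/
import Mathlib

section
/- Let X = {x₁,…,xₙ} be a finite metric space S-embedded as points y₁,…,yₙ on a sphere of radius r centered at the origin in ℝ^m, and suppose the affine hull of {y₁,…,yₙ} is all of ℝ^m. Then M(X) = 2r², i.e., sup over weights wᵢ summing to 1 of Σᵢⱼ wᵢwⱼ d(xᵢ,xⱼ) equals 2r². -/
/-!
Expanding the squared distances, weights `w` with `∑ wᵢ = 1` and points on the sphere of radius `r`
about `0` give `∑ᵢⱼ wᵢ wⱼ ‖yᵢ - yⱼ‖² = 2 r² - 2 ‖∑ᵢ wᵢ yᵢ‖²`. Hence the sum never exceeds `2 r²`,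
and it equals `2 r²` as soon as the barycentre `∑ᵢ wᵢ yᵢ` is the centre `0`, which is an affine
combination of the `yᵢ` because they affinely span the whole space.
-/

open Finset

section WeightedDistances

variable {ι E : Type*} [Fintype ι] [NormedAddCommGroup E] [InnerProductSpace ℝ E]
  (w : ι → ℝ) (y : ι → E)

theorem norm_sum_smul_sq :
    ‖∑ k, w k • y k‖ ^ 2 = ∑ k, ∑ l, w k * w l * inner ℝ (y k) (y l) := by
  simp_rw [← real_inner_self_eq_norm_sq, sum_inner, inner_sum, real_inner_smul_left,
    real_inner_smul_right, mul_assoc]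

theorem sum_sum_mul_norm_sub_sq :
    ∑ k, ∑ l, w k * w l * ‖y k - y l‖ ^ 2
      = 2 * (∑ k, w k) * ∑ k, w k * ‖y k‖ ^ 2 - 2 * ‖∑ k, w k • y k‖ ^ 2 := by
  have hsplit : ∀ k l, w k * w l * ‖y k - y l‖ ^ 2
      = w k * ‖y k‖ ^ 2 * w l + w k * (w l * ‖y l‖ ^ 2)
        - 2 * (w k * w l * inner ℝ (y k) (y l)) := fun k l => by
    rw [norm_sub_sq_real]; ring
  simp only [hsplit, sum_sub_distrib, sum_add_distrib, norm_sum_smul_sq, ← mul_sum, ← sum_mul]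
  ring

variable {w y}

theorem sum_sum_mul_norm_sub_sq_of_norm_eq {r : ℝ} (hy : ∀ k, ‖y k‖ = r) (hw : ∑ k, w k = 1) :
    ∑ k, ∑ l, w k * w l * ‖y k - y l‖ ^ 2 = 2 * r ^ 2 - 2 * ‖∑ k, w k • y k‖ ^ 2 := by
  simp [sum_sum_mul_norm_sub_sq, hy, ← sum_mul, hw]

theorem exists_sum_eq_one_sum_smul_eq_zero (hspan : affineSpan ℝ (Set.range y) = ⊤) :
    ∃ w : ι → ℝ, ∑ k, w k = 1 ∧ ∑ k, w k • y k = 0 := by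
  obtain ⟨w, hw, h0⟩ :=
    eq_affineCombination_of_mem_affineSpan_of_fintype (hspan ▸ AffineSubspace.mem_top ℝ E 0)
  exact ⟨w, hw, by rw [← univ.affineCombination_eq_linear_combination y w hw, ← h0]⟩

theorem isGreatest_sum_sum_mul_norm_sub_sq {r : ℝ} (hy : ∀ k, ‖y k‖ = r)
    (hspan : affineSpan ℝ (Set.range y) = ⊤) :
    IsGreatest {s : ℝ | ∃ w : ι → ℝ, ∑ k, w k = 1 ∧
      s = ∑ k, ∑ l, w k * w l * ‖y k - y l‖ ^ 2} (2 * r ^ 2) := by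
  obtain ⟨w₀, hw₀, hbary⟩ := exists_sum_eq_one_sum_smul_eq_zero hspan
  refine ⟨⟨w₀, hw₀, ?_⟩, ?_⟩
  · simp [sum_sum_mul_norm_sub_sq_of_norm_eq hy hw₀, hbary]
  · rintro s ⟨w, hw, rfl⟩
    rw [sum_sum_mul_norm_sub_sq_of_norm_eq hy hw]
    linarith [sq_nonneg ‖∑ k, w k • y k‖]

end WeightedDistances

theorem s_embedding_minimal_dim_M_eq_general
    {X : Type*} [MetricSpace X] (n m : ℕ)
    (x : Fin n → X)
    (y : Fin n → EuclideanSpace ℝ (Fin m))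
    (r : ℝ) (hsphere : ∀ k, ‖y k‖ = r)
    (hemb : ∀ k l, ‖y k - y l‖ ^ 2 = dist (x k) (x l))
    (hspan : affineSpan ℝ (Set.range y) = ⊤) :
    IsLUB {s : ℝ | ∃ w : Fin n → ℝ, (∑ k, w k) = 1 ∧
        s = ∑ k, ∑ l, w k * w l * dist (x k) (x l)} (2 * r ^ 2) := by
  simp_rw [← hemb]
  exact (isGreatest_sum_sum_mul_norm_sub_sq hsphere hspan).isLUB

theorem s_embedding_minimal_dim_M_eq
    {X : Type*} [MetricSpace X] (n m : ℕ)
    (x : Fin n → X) (hx : Function.Bijective x)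
    (y : Fin n → EuclideanSpace ℝ (Fin m))
    (r : ℝ) (hsphere : ∀ k, ‖y k‖ = r)
    (hemb : ∀ k l, ‖y k - y l‖ ^ 2 = dist (x k) (x l))
    (hspan : affineSpan ℝ (Set.range y) = ⊤) :
    IsLUB {s : ℝ | ∃ w : Fin n → ℝ, (∑ k, w k) = 1 ∧
        s = ∑ k, ∑ l, w k * w l * dist (x k) (x l)} (2 * r ^ 2) :=
  s_embedding_minimal_dim_M_eq_general n m x y r hsphere hemb hspan
end

section
/- Let X = {x₁,…,xₙ} be S-embedded as y₁,…,yₙ on a sphere of radius r centered at the origin in ℝ^m with affine hull equal to ℝ^m. Then for real weights wᵢ with Σwᵢ = 1, the quadratic form Σᵢⱼ wᵢwⱼ d(xᵢ,xⱼ) attains its maximum value M(X) = 2r² if and only if Σᵢ wᵢyᵢ = 0 (the center of the sphere). -/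
/-! Expanding `‖yₖ - yₗ‖² = ‖yₖ‖² - 2⟪yₖ, yₗ⟫ + ‖yₗ‖²` turns the quadratic form, for weights
summing to one, into `2 r² - 2 ‖∑ wₖ yₖ‖²` (a weighted variance identity). Hence it equals
`2 r²` exactly when the barycenter `∑ wₖ yₖ` is the center of the sphere. -/

open Finset

theorem norm_sum_smul_sq_eq_sum_sum_inner {ι E : Type*} [NormedAddCommGroup E]
    [InnerProductSpace ℝ E] (s : Finset ι) (w : ι → ℝ) (y : ι → E) :
    ‖∑ i ∈ s, w i • y i‖ ^ 2 = ∑ i ∈ s, ∑ j ∈ s, w i * w j * inner ℝ (y i) (y j) := by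
  rw [← real_inner_self_eq_norm_sq, sum_inner]
  simp only [inner_sum, real_inner_smul_left, real_inner_smul_right]
  exact sum_congr rfl fun i _ => sum_congr rfl fun j _ => by ring

theorem sum_sum_mul_norm_sub_sq_s8 {ι E : Type*} [NormedAddCommGroup E] [InnerProductSpace ℝ E]
    (s : Finset ι) (w : ι → ℝ) (y : ι → E) (hw : ∑ i ∈ s, w i = 1) :
    ∑ i ∈ s, ∑ j ∈ s, w i * w j * ‖y i - y j‖ ^ 2 =
      2 * ∑ i ∈ s, w i * ‖y i‖ ^ 2 - 2 * ‖∑ i ∈ s, w i • y i‖ ^ 2 := by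
  have hexpand : ∀ i j, w i * w j * ‖y i - y j‖ ^ 2 =
      w j * (w i * ‖y i‖ ^ 2) + w i * (w j * ‖y j‖ ^ 2) - 2 * (w i * w j * inner ℝ (y i) (y j)) :=
    fun i j => by rw [norm_sub_sq_real]; ring
  simp only [hexpand, sum_sub_distrib, sum_add_distrib, ← sum_mul, ← mul_sum, hw,
    norm_sum_smul_sq_eq_sum_sum_inner]
  ring

theorem s_embedding_maximal_iff_center_general
    {X : Type*} [MetricSpace X] (n m : ℕ)
    (x : Fin n → X)
    (y : Fin n → EuclideanSpace ℝ (Fin m))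
    (r : ℝ) (hsphere : ∀ k, ‖y k‖ = r)
    (hemb : ∀ k l, ‖y k - y l‖ ^ 2 = dist (x k) (x l))
    (w : Fin n → ℝ) (hw : (∑ k, w k) = 1) :
    (∑ k, ∑ l, w k * w l * dist (x k) (x l)) = 2 * r ^ 2 ↔
      (∑ k, w k • y k) = 0 := by
  have hmoment : ∑ k, w k * ‖y k‖ ^ 2 = r ^ 2 := by
    simp only [hsphere, ← sum_mul, hw, one_mul]
  simp only [← hemb, sum_sum_mul_norm_sub_sq_s8 _ w y hw, hmoment]
  rw [sub_eq_self, mul_eq_zero_iff_left two_ne_zero, sq_eq_zero_iff, norm_eq_zero]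

theorem s_embedding_maximal_iff_center
    {X : Type*} [MetricSpace X] (n m : ℕ)
    (x : Fin n → X) (hx : Function.Bijective x)
    (y : Fin n → EuclideanSpace ℝ (Fin m))
    (r : ℝ) (hsphere : ∀ k, ‖y k‖ = r)
    (hemb : ∀ k l, ‖y k - y l‖ ^ 2 = dist (x k) (x l))
    (hspan : affineSpan ℝ (Set.range y) = ⊤)
    (w : Fin n → ℝ) (hw : (∑ k, w k) = 1) :
    (∑ k, ∑ l, w k * w l * dist (x k) (x l)) = 2 * r ^ 2 ↔
      (∑ k, w k • y k) = 0 :=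
  s_embedding_maximal_iff_center_general n m x y r hsphere hemb w hw
end
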